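/- The permutation obtained from a 132-avoiding permutation σ by the shift move σ^{σ_j} is again 132-avoiding. Precisely: let σ ∈ S_n be 132-avoiding and suppose there are indices i < j such that σ_i < σ_j, every entry strictly before position i is greater than σ_j, and every entry strictly between positions i and j is less than σ_i. Let φ be the permutation obtained from σ by removing the entry σ_j and reinserting it immediately before position i. Then φ is 132-avoiding. -/

import Mathlib

/-- A permutation `σ` of `{0,…,n-1}` is 132-avoiding if there are no indices
`a < b < c` with `σ a < σ c < σ b`. -/
def Avoids132 {n : ℕ} (σ : Equiv.Perm (Fin n)) : Prop :=
  ¬ ∃ a b c : Fin n, a < b ∧ b < c ∧ σ a < σ c ∧ σ c < σ b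

/-- `s` is an occurrence of the pattern `τ` in `σ`: a strictly increasing choice of
positions whose values are order-isomorphic to `τ`. -/
def IsOccurrence {k n : ℕ} (τ : Equiv.Perm (Fin k)) (σ : Equiv.Perm (Fin n))
    (s : Fin k → Fin n) : Prop :=
  StrictMono s ∧ ∀ a b : Fin k, σ (s a) < σ (s b) ↔ τ a < τ b

/-- The number of occurrences of the pattern `τ` in `σ`. -/
noncomputable def numOcc {k n : ℕ} (τ : Equiv.Perm (Fin k)) (σ : Equiv.Perm (Fin n)) : ℕ :=
  Nat.card {s : Fin k → Fin n // IsOccurrence τ σ s}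

open scoped Classical in
/-- `pop n τ` is `A_n(τ)`: the total number of occurrences of the pattern `τ`
over all 132-avoiding permutations of length `n`. -/
noncomputable def pop (n : ℕ) {k : ℕ} (τ : Equiv.Perm (Fin k)) : ℕ :=
  ∑ σ : Equiv.Perm (Fin n), if Avoids132 σ then numOcc τ σ else 0

/-- The move `σ^{σ_j}` is defined at positions `i < j`. -/
def MoveAt {n : ℕ} (σ : Equiv.Perm (Fin n)) (i j : Fin n) : Prop :=
  i < j ∧ σ i < σ j ∧ (∀ a : Fin n, a < i → σ j < σ a) ∧
    (∀ b : Fin n, i < b → b < j → σ b < σ i)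

/-- `φ = σ^{σ_j}`: the move is defined at `i < j` and `φ` is obtained from `σ` by removing
the entry at position `j` and reinserting it immediately before position `i`. -/
def IsShift {n : ℕ} (σ φ : Equiv.Perm (Fin n)) (i j : Fin n) : Prop :=
  MoveAt σ i j ∧
  (∀ t : Fin n, t < i → φ t = σ t) ∧ φ i = σ j ∧
  (∀ t : Fin n, i ≤ t → ∀ h : t < j,
    φ ⟨(t : ℕ) + 1, Nat.lt_of_le_of_lt (Nat.succ_le_of_lt (Fin.lt_def.mp h)) j.isLt⟩ = σ t) ∧
  (∀ t : Fin n, j < t → φ t = σ t)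

/-- The pattern 213 (zero-indexed one-line notation 1,0,2). -/
def p213 : Equiv.Perm (Fin 3) := Equiv.swap 0 1
/-- The pattern 231 (zero-indexed one-line notation 1,2,0). -/
def p231 : Equiv.Perm (Fin 3) := finRotate 3
/-- The pattern 312 (zero-indexed one-line notation 2,0,1). -/
def p312 : Equiv.Perm (Fin 3) := (finRotate 3)⁻¹
/-- The pattern 3241 (zero-indexed one-line notation 2,1,3,0). -/
def p3241 : Equiv.Perm (Fin 4) := ⟨![2,1,3,0], ![3,1,0,2], by decide, by decide⟩
/-- The pattern 3421 (zero-indexed one-line notation 2,3,1,0). -/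
def p3421 : Equiv.Perm (Fin 4) := ⟨![2,3,1,0], ![3,2,0,1], by decide, by decide⟩
/-- The pattern 324, order-isomorphic to 213. -/
def p324 : Equiv.Perm (Fin 3) := Equiv.swap 0 1
/-- The pattern 342, order-isomorphic to 231. -/
def p342 : Equiv.Perm (Fin 3) := finRotate 3
/-- The decreasing pattern of length 2. -/
def p21 : Equiv.Perm (Fin 2) := Equiv.swap 0 1
/-- The increasing pattern of length 2. -/
def p12 : Equiv.Perm (Fin 2) := 1
/-- The single-letter pattern. -/
def p1 : Equiv.Perm (Fin 1) := 1

/-- `Cm m = |S_m(132)|`, the number of 132-avoiding permutations of length `m`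
(the `m`-th Catalan number). -/
noncomputable def Cm (m : ℕ) : ℕ := Nat.card {σ : Equiv.Perm (Fin m) // Avoids132 σ}

/-- Fuelled construction of the binary tree of a sequence: root at the maximum entry,
left/right subtrees built recursively from the parts left/right of the maximum. -/
def toTreeAux : ℕ → List ℕ → BinaryTree Unit
  | 0, _ => BinaryTree.nil
  | _ + 1, [] => BinaryTree.nil
  | fuel + 1, l =>
    let m := l.idxOf (l.foldr max 0)
    BinaryTree.node () (toTreeAux fuel (l.take m)) (toTreeAux fuel (l.drop (m + 1)))

/-- The (unlabelled) binary tree associated to a sequence of distinct naturals. -/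
def toTree (l : List ℕ) : BinaryTree Unit := toTreeAux l.length l

/-- The binary tree `T(σ)` associated to a permutation `σ`. -/
def treeOf {n : ℕ} (σ : Equiv.Perm (Fin n)) : BinaryTree Unit :=
  toTree (List.ofFn fun i => (σ i : ℕ))

/-- Labelled version of `toTreeAux`, storing the value at each vertex. -/
def toTreeLAux : ℕ → List ℕ → BinaryTree ℕ
  | 0, _ => BinaryTree.nil
  | _ + 1, [] => BinaryTree.nil
  | fuel + 1, l =>
    let m := l.idxOf (l.foldr max 0)
    BinaryTree.node (l.foldr max 0) (toTreeLAux fuel (l.take m)) (toTreeLAux fuel (l.drop (m + 1)))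

/-- The labelled binary tree associated to a sequence of distinct naturals. -/
def toTreeL (l : List ℕ) : BinaryTree ℕ := toTreeLAux l.length l

/-- The labelled binary tree `T(σ)` associated to a permutation `σ`, vertices
labelled by the values of `σ`. -/
def treeOfL {n : ℕ} (σ : Equiv.Perm (Fin n)) : BinaryTree ℕ :=
  toTreeL (List.ofFn fun i => (σ i : ℕ))

/-- `spineAux t = (r, S)` where `r` is the number of vertices on the spine through the
root of `t` (following right children) and `S` is the multiset of sizes of all the
other spines (components after deleting all left-child edges). -/
def spineAux {α : Type*} : BinaryTree α → ℕ × Multiset ℕ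
  | BinaryTree.nil => (0, 0)
  | BinaryTree.node _ L R =>
    let aL := spineAux L
    let aR := spineAux R
    (aR.1 + 1, (if aL.1 = 0 then aL.2 else aL.1 ::ₘ aL.2) + aR.2)

/-- The spine structure of a binary tree: the multiset of sizes of the connected
components obtained after deleting every edge joining a left child to its parent. -/
def spineStructure {α : Type*} (t : BinaryTree α) : Multiset ℕ :=
  let a := spineAux t
  if a.1 = 0 then a.2 else a.1 ::ₘ a.2

/-- `RefinementLE b a` means `b ≤_R a` in refinement order: `a` can be obtained from `b`
by merging (nonempty) subsets of its parts. -/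
def RefinementLE (b a : Multiset ℕ) : Prop :=
  ∃ P : Multiset (Multiset ℕ), (∀ m ∈ P, m ≠ 0) ∧ P.sum = b ∧ P.map Multiset.sum = a

/-- The label of the root of a labelled tree, if any. -/
def rootLabel? : BinaryTree ℕ → Option ℕ
  | BinaryTree.nil => none
  | BinaryTree.node v _ _ => some v

/-- `IsParent t p c`: in the labelled tree `t`, the vertex labelled `p` is the parent of
the vertex labelled `c`. -/
def IsParent : BinaryTree ℕ → ℕ → ℕ → Prop
  | BinaryTree.nil, _, _ => False
  | BinaryTree.node v L R, p, c =>
      (p = v ∧ (rootLabel? L = some c ∨ rootLabel? R = some c)) ∨ IsParent L p c ∨ IsParent R p c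

/-!
Write `σ' = σ ∘ j.succAbove` for `σ` with the entry at `j` deleted. The shift inserts `σ j`
into `σ'` at position `i`, so `φ ∘ i.succAbove = σ'`, and a 132-pattern of `φ` avoiding position
`i` is one of `σ`. A pattern through position `i` is impossible: every entry to the left of `i`
exceeds `σ j`, so `i` cannot carry the `3` or the `2`; if it carries the `1`, the `3` lies to the
right of `j`, since the entries at positions `i + 1, …, j` of `φ` are at most `σ i < σ j`, and
then `j` together with the `3` and the `2` is a 132-pattern of `σ`.
-/

namespace IsShift

variable {m : ℕ} {σ φ : Equiv.Perm (Fin (m + 1))} {i j : Fin (m + 1)}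

theorem apply_succAbove (h : IsShift σ φ i j) (k : Fin m) :
    φ (i.succAbove k) = σ (j.succAbove k) := by
  obtain ⟨⟨hij, -, -, -⟩, hlt, -, hmid, hgt⟩ := h
  rcases lt_or_ge k.castSucc i with hki | hik
  · rw [Fin.succAbove_of_castSucc_lt _ _ hki, Fin.succAbove_of_castSucc_lt _ _ (hki.trans hij)]
    exact hlt _ hki
  rw [Fin.succAbove_of_le_castSucc _ _ hik]
  rcases lt_or_ge k.castSucc j with hkj | hjk
  · rw [Fin.succAbove_of_castSucc_lt _ _ hkj]
    exact hmid _ hik hkj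
  · rw [Fin.succAbove_of_le_castSucc _ _ hjk]
    exact hgt _ (Fin.le_castSucc_iff.mp hjk)

theorem apply_self (h : IsShift σ φ i j) : φ i = σ j := h.2.2.1

theorem apply_of_lt (h : IsShift σ φ i j) {p : Fin (m + 1)} (hpi : p < i) : φ p = σ p :=
  h.2.1 p hpi

theorem apply_of_gt (h : IsShift σ φ i j) {p : Fin (m + 1)} (hjp : j < p) : φ p = σ p :=
  h.2.2.2.2 p hjp

theorem apply_self_lt_apply_of_lt (h : IsShift σ φ i j) {a : Fin (m + 1)} (ha : a < i) :
    φ i < φ a := by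
  obtain ⟨-, -, hleft, -⟩ := h.1
  rw [h.apply_of_lt ha, h.apply_self]
  exact hleft a ha

theorem apply_lt_apply_self_of_lt_of_le (h : IsShift σ φ i j) {p : Fin (m + 1)} (hip : i < p)
    (hpj : p ≤ j) : φ p < φ i := by
  obtain ⟨-, hij, -, hmid⟩ := h.1
  obtain ⟨k, rfl⟩ := Fin.exists_succAbove_eq hip.ne'
  have hik : i ≤ k.castSucc := (Fin.lt_succAbove_iff_le_castSucc _ _).mp hip
  have hkj : k.castSucc < j :=
    Fin.castSucc_lt_succ.trans_le (Fin.succAbove_of_le_castSucc _ _ hik ▸ hpj)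
  rw [h.apply_succAbove, Fin.succAbove_of_castSucc_lt _ _ hkj, h.apply_self]
  have hki : σ k.castSucc ≤ σ i := by
    rcases hik.eq_or_lt with rfl | hlt
    · exact le_rfl
    · exact (hmid _ hlt hkj).le
  exact hki.trans_lt hij

end IsShift

/-- the shift move `σ^{σ_j}` of a 132-avoiding permutation is 132-avoiding. -/
theorem shift_avoids132 {n : ℕ} (σ φ : Equiv.Perm (Fin n)) (i j : Fin n)
    (hσ : Avoids132 σ) (h : IsShift σ φ i j) : Avoids132 φ := by
  obtain ⟨m, rfl⟩ : ∃ m, n = m + 1 := Nat.exists_eq_add_one_of_ne_zero i.pos.ne'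
  rintro ⟨a, b, c, hab, hbc, hac, hcb⟩
  by_cases hi : a = i ∨ b = i ∨ c = i
  · rcases hi with rfl | rfl | rfl
    · rcases le_or_gt b j with hbj | hjb
      · exact (h.apply_lt_apply_self_of_lt_of_le hab hbj).not_gt (hac.trans hcb)
      · rw [h.apply_self, h.apply_of_gt (hjb.trans hbc)] at hac
        rw [h.apply_of_gt hjb, h.apply_of_gt (hjb.trans hbc)] at hcb
        exact hσ ⟨j, b, c, hjb, hbc, hac, hcb⟩
    · exact (h.apply_self_lt_apply_of_lt hab).not_gt (hac.trans hcb)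
    · exact (h.apply_self_lt_apply_of_lt (hab.trans hbc)).not_gt hac
  obtain ⟨hai, hbi, hci⟩ : a ≠ i ∧ b ≠ i ∧ c ≠ i := by tauto
  obtain ⟨a, rfl⟩ := Fin.exists_succAbove_eq hai
  obtain ⟨b, rfl⟩ := Fin.exists_succAbove_eq hbi
  obtain ⟨c, rfl⟩ := Fin.exists_succAbove_eq hci
  rw [Fin.succAbove_lt_succAbove_iff] at hab hbc
  rw [h.apply_succAbove, h.apply_succAbove] at hac hcb
  exact hσ ⟨_, _, _, Fin.strictMono_succAbove j hab, Fin.strictMono_succAbove j hbc, hac, hcb⟩
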